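/- arXiv:2604.13732 — 4 statements merged into one kernel-verified Lean document; each statement's English description precedes it below -/
import Mathlib

section
/- Let n ≥ 1 and 0 < δ₁ < δ₂ ≤ n. Then for every function f : ℝⁿ → [0, ∞], ( ∫_{ℝⁿ} f dH^{δ₂}_∞ )^{1/δ₂} ≤ (δ₂/δ₁)^{1/δ₂} ( ∫_{ℝⁿ} f^{δ₁/δ₂} dH^{δ₁}_∞ )^{1/δ₁}. -/
open scoped ENNReal NNReal
open Metric Set Filter MeasureTheory

/-- The `δ`-dimensional Hausdorff content of a set `E ⊆ ℝⁿ`, defined via countable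
covers of `E` by open balls. -/
noncomputable def hausdorffContent (n : ℕ) (δ : ℝ)
    (E : Set (EuclideanSpace ℝ (Fin n))) : ℝ≥0∞ :=
  ⨅ (c : ℕ → EuclideanSpace ℝ (Fin n) × ℝ) (_ : ∀ i, 0 < (c i).2)
    (_ : E ⊆ ⋃ i, Metric.ball (c i).1 (c i).2),
    ∑' i, ENNReal.ofReal ((c i).2 ^ δ)

/-- The Choquet integral of `f : ℝⁿ → [0, ∞]` with respect to the `δ`-dimensional
Hausdorff content. -/
noncomputable def choquetIntegral (n : ℕ) (δ : ℝ)
    (f : EuclideanSpace ℝ (Fin n) → ℝ≥0∞) : ℝ≥0∞ :=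
  ∫⁻ t in Set.Ioi (0 : ℝ), hausdorffContent n δ {x | ENNReal.ofReal t < f x}

/-!
Put `p = δ₂ / δ₁`, `q = δ₁ / δ₂` and `A = ∫ f ^ q dH^{δ₁}_∞`. Since `∑ rᵢ ^ δ₂ ≤ (∑ rᵢ ^ δ₁) ^ p`
for every cover, `H^{δ₂}_∞ ≤ (H^{δ₁}_∞) ^ p`. Chebyshev's inequality `s · H^{δ₁}_∞{f ^ q > s} ≤ A`
at `s = t ^ q` turns this into the linear bound
`H^{δ₂}_∞{f > t} ≤ H^{δ₁}_∞{f ^ q > t ^ q} ^ p ≤ A ^ (p - 1) t ^ (q - 1) H^{δ₁}_∞{f ^ q > t ^ q}`,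
and integrating in `t` with the substitution `s = t ^ q` gives `∫ f dH^{δ₂}_∞ ≤ p A ^ p`.
-/

namespace ENNReal

lemma rpow_eq_mul_rpow_sub_one (a : ℝ≥0∞) {p : ℝ} (hp : 1 ≤ p) : a ^ p = a * a ^ (p - 1) := by
  conv_lhs => rw [← add_sub_cancel 1 p]
  rw [rpow_add_of_nonneg _ _ zero_le_one (sub_nonneg.2 hp), rpow_one]

lemma tsum_rpow_le_rpow_tsum (a : ℕ → ℝ≥0∞) {p : ℝ} (hp : 1 ≤ p) :
    ∑' i, a i ^ p ≤ (∑' i, a i) ^ p :=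
  calc ∑' i, a i ^ p = ∑' i, a i * a i ^ (p - 1) := by
        simp only [rpow_eq_mul_rpow_sub_one _ hp]
    _ ≤ ∑' i, a i * (∑' j, a j) ^ (p - 1) := by
        gcongr with i
        exact ENNReal.le_tsum i
    _ = (∑' j, a j) ^ p := by rw [ENNReal.tsum_mul_right, ← rpow_eq_mul_rpow_sub_one _ hp]

lemma rpow_le_mul_of_ofReal_mul_le {a A : ℝ≥0∞} {s p : ℝ} (hs : 0 < s) (hp : 1 ≤ p)
    (h : ENNReal.ofReal s * a ≤ A) :
    a ^ p ≤ A ^ (p - 1) * ENNReal.ofReal (s ^ (1 - p)) * a := by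
  have hp' : 0 ≤ p - 1 := sub_nonneg.2 hp
  have hcancel : ENNReal.ofReal (s ^ (1 - p)) * ENNReal.ofReal (s ^ (p - 1)) = 1 := by
    rw [← ofReal_mul (by positivity), ← Real.rpow_add hs]
    simp
  calc a ^ p = ENNReal.ofReal (s ^ (1 - p)) * (ENNReal.ofReal s * a) ^ (p - 1) * a := by
        rw [mul_rpow_of_nonneg _ _ hp', ofReal_rpow_of_pos hs, ← mul_assoc, hcancel, one_mul,
          mul_comm, ← rpow_eq_mul_rpow_sub_one _ hp]
    _ ≤ ENNReal.ofReal (s ^ (1 - p)) * A ^ (p - 1) * a := by gcongr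
    _ = A ^ (p - 1) * ENNReal.ofReal (s ^ (1 - p)) * a := by rw [mul_comm (ENNReal.ofReal _)]

end ENNReal

lemma lintegral_rpow_sub_one_mul_comp_rpow_Ioi (h : ℝ → ℝ≥0∞) {q : ℝ} (hq : 0 < q) :
    ∫⁻ t in Ioi 0, ENNReal.ofReal (t ^ (q - 1)) * h (t ^ q)
      = ENNReal.ofReal q⁻¹ * ∫⁻ s in Ioi 0, h s := by
  have himage : (fun t : ℝ => t ^ q) '' Ioi 0 = Ioi 0 := by
    refine Subset.antisymm (image_subset_iff.2 fun t ht => Real.rpow_pos_of_pos ht q)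
      fun s hs => ⟨s ^ q⁻¹, Real.rpow_pos_of_pos hs _, ?_⟩
    simp only [← Real.rpow_mul (le_of_lt hs), inv_mul_cancel₀ hq.ne', Real.rpow_one]
  have hsubst := lintegral_image_eq_lintegral_abs_deriv_mul measurableSet_Ioi
    (fun t ht => (Real.hasDerivAt_rpow_const (Or.inl (ne_of_gt ht))).hasDerivWithinAt)
    ((Real.rpow_left_injOn hq.ne').mono fun _ ht => le_of_lt (mem_Ioi.1 ht)) h
  rw [himage] at hsubst
  rw [hsubst, ← lintegral_const_mul' _ _ ENNReal.ofReal_ne_top]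
  refine setLIntegral_congr_fun measurableSet_Ioi fun t ht => ?_
  have ht' : 0 ≤ t ^ (q - 1) := Real.rpow_nonneg (le_of_lt ht) _
  rw [abs_of_nonneg (mul_nonneg hq.le ht'), ENNReal.ofReal_mul hq.le, ← mul_assoc, ← mul_assoc,
    ← ENNReal.ofReal_mul (inv_nonneg.2 hq.le), inv_mul_cancel₀ hq.ne', ENNReal.ofReal_one, one_mul]

section HausdorffContent

variable {n : ℕ} {δ : ℝ}

lemma hausdorffContent_le_tsum {E : Set (EuclideanSpace ℝ (Fin n))}
    (c : ℕ → EuclideanSpace ℝ (Fin n) × ℝ) (hc : ∀ i, 0 < (c i).2)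
    (hE : E ⊆ ⋃ i, ball (c i).1 (c i).2) :
    hausdorffContent n δ E ≤ ∑' i, ENNReal.ofReal ((c i).2 ^ δ) :=
  iInf₂_le_of_le c hc (iInf_le _ hE)

lemma hausdorffContent_mono {E F : Set (EuclideanSpace ℝ (Fin n))} (h : E ⊆ F) :
    hausdorffContent n δ E ≤ hausdorffContent n δ F :=
  le_iInf₂ fun c hc => le_iInf fun hF => hausdorffContent_le_tsum c hc (h.trans hF)

lemma hausdorffContent_le_rpow {δ₁ δ₂ : ℝ} (h1 : 0 < δ₁) (h12 : δ₁ ≤ δ₂)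
    (E : Set (EuclideanSpace ℝ (Fin n))) :
    hausdorffContent n δ₂ E ≤ hausdorffContent n δ₁ E ^ (δ₂ / δ₁) := by
  have hp : 1 ≤ δ₂ / δ₁ := (one_le_div h1).2 h12
  rw [← ENNReal.rpow_inv_le_iff (by positivity)]
  refine le_iInf₂ fun c hc => le_iInf fun hE => ?_
  rw [ENNReal.rpow_inv_le_iff (by positivity)]
  calc hausdorffContent n δ₂ E ≤ ∑' i, ENNReal.ofReal ((c i).2 ^ δ₂) :=
        hausdorffContent_le_tsum c hc hE
    _ = ∑' i, ENNReal.ofReal ((c i).2 ^ δ₁) ^ (δ₂ / δ₁) := by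
        refine tsum_congr fun i => ?_
        rw [ENNReal.ofReal_rpow_of_pos (Real.rpow_pos_of_pos (hc i) _), ← Real.rpow_mul (hc i).le,
          mul_div_cancel₀ _ h1.ne']
    _ ≤ (∑' i, ENNReal.ofReal ((c i).2 ^ δ₁)) ^ (δ₂ / δ₁) :=
        ENNReal.tsum_rpow_le_rpow_tsum _ hp

lemma ofReal_mul_hausdorffContent_le_choquetIntegral (g : EuclideanSpace ℝ (Fin n) → ℝ≥0∞)
    (s : ℝ) :
    ENNReal.ofReal s * hausdorffContent n δ {x | ENNReal.ofReal s < g x}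
      ≤ choquetIntegral n δ g :=
  calc ENNReal.ofReal s * hausdorffContent n δ {x | ENNReal.ofReal s < g x}
      = ∫⁻ _ in Ioo 0 s, hausdorffContent n δ {x | ENNReal.ofReal s < g x} := by
        rw [setLIntegral_const, Real.volume_Ioo, sub_zero, mul_comm]
    _ ≤ ∫⁻ t in Ioo 0 s, hausdorffContent n δ {x | ENNReal.ofReal t < g x} :=
        setLIntegral_mono' measurableSet_Ioo fun t ht => hausdorffContent_mono
          fun x hx => (ENNReal.ofReal_le_ofReal ht.2.le).trans_lt hx
    _ ≤ choquetIntegral n δ g := lintegral_mono_set Ioo_subset_Ioi_self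

end HausdorffContent

theorem choquetIntegral_le_ofReal_mul_choquetIntegral_rpow {n : ℕ} {δ₁ δ₂ : ℝ} (h1 : 0 < δ₁)
    (h12 : δ₁ ≤ δ₂) (f : EuclideanSpace ℝ (Fin n) → ℝ≥0∞) :
    choquetIntegral n δ₂ f
      ≤ ENNReal.ofReal (δ₂ / δ₁) *
          choquetIntegral n δ₁ (fun x => f x ^ (δ₁ / δ₂)) ^ (δ₂ / δ₁) := by
  set p := δ₂ / δ₁
  set q := δ₁ / δ₂
  set A := choquetIntegral n δ₁ (fun x => f x ^ q)
  have hp : 1 ≤ p := (one_le_div h1).2 h12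
  have hq : 0 < q := div_pos h1 (h1.trans_le h12)
  have hpq : q⁻¹ = p := inv_div _ _
  rcases eq_or_ne A ∞ with hA | hA
  · rw [hA, ENNReal.top_rpow_of_pos (by positivity),
      ENNReal.mul_top (ENNReal.ofReal_pos.2 (by positivity)).ne']
    exact le_top
  set h : ℝ → ℝ≥0∞ := fun s => hausdorffContent n δ₁ {x | ENNReal.ofReal s < f x ^ q}
  have hlevel : ∀ t : ℝ, 0 < t → hausdorffContent n δ₂ {x | ENNReal.ofReal t < f x}
      ≤ A ^ (p - 1) * (ENNReal.ofReal (t ^ (q - 1)) * h (t ^ q)) := by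
    intro t ht
    have hset : {x | ENNReal.ofReal t < f x} = {x | ENNReal.ofReal (t ^ q) < f x ^ q} := by
      ext x
      simp only [mem_ofPred_eq, ← ENNReal.ofReal_rpow_of_pos ht, ENNReal.rpow_lt_rpow_iff hq]
    have hexp : (t ^ q) ^ (1 - p) = t ^ (q - 1) := by
      rw [← Real.rpow_mul ht.le, mul_sub, mul_one, ← hpq, mul_inv_cancel₀ hq.ne']
    rw [hset, ← mul_assoc, ← hexp]
    exact (hausdorffContent_le_rpow h1 h12 _).trans (ENNReal.rpow_le_mul_of_ofReal_mul_le
      (Real.rpow_pos_of_pos ht q) hp (ofReal_mul_hausdorffContent_le_choquetIntegral _ _))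
  calc choquetIntegral n δ₂ f
      ≤ ∫⁻ t in Ioi 0, A ^ (p - 1) * (ENNReal.ofReal (t ^ (q - 1)) * h (t ^ q)) :=
        setLIntegral_mono' measurableSet_Ioi hlevel
    _ = A ^ (p - 1) * (ENNReal.ofReal p * A) := by
        rw [lintegral_const_mul' _ _ (ENNReal.rpow_ne_top_of_nonneg (by linarith) hA),
          lintegral_rpow_sub_one_mul_comp_rpow_Ioi h hq, hpq]
        rfl
    _ = ENNReal.ofReal p * A ^ p := by
        rw [ENNReal.rpow_eq_mul_rpow_sub_one A hp]
        ring

theorem stmt_3_general (n : ℕ) (δ₁ δ₂ : ℝ) (h1 : 0 < δ₁) (h12 : δ₁ < δ₂)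
    (f : EuclideanSpace ℝ (Fin n) → ℝ≥0∞) :
    (choquetIntegral n δ₂ f) ^ (1 / δ₂)
      ≤ ENNReal.ofReal ((δ₂ / δ₁) ^ (1 / δ₂)) *
        (choquetIntegral n δ₁ (fun x => f x ^ (δ₁ / δ₂))) ^ (1 / δ₁) := by
  have h2 : 0 < δ₂ := h1.trans h12
  calc (choquetIntegral n δ₂ f) ^ (1 / δ₂)
      ≤ (ENNReal.ofReal (δ₂ / δ₁) *
          choquetIntegral n δ₁ (fun x => f x ^ (δ₁ / δ₂)) ^ (δ₂ / δ₁)) ^ (1 / δ₂) := by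
        gcongr
        exact choquetIntegral_le_ofReal_mul_choquetIntegral_rpow h1 h12.le f
    _ = _ := by
        rw [ENNReal.mul_rpow_of_nonneg _ _ (by positivity),
          ENNReal.ofReal_rpow_of_pos (by positivity), ← ENNReal.rpow_mul,
          show δ₂ / δ₁ * (1 / δ₂) = 1 / δ₁ by field_simp]

/-- Changing the dimension of the Hausdorff content under the Choquet integral. -/
theorem stmt_3 (n : ℕ) (hn : 1 ≤ n) (δ₁ δ₂ : ℝ) (h1 : 0 < δ₁) (h12 : δ₁ < δ₂)
    (h2 : δ₂ ≤ n) (f : EuclideanSpace ℝ (Fin n) → ℝ≥0∞) :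
    (choquetIntegral n δ₂ f) ^ (1 / δ₂)
      ≤ ENNReal.ofReal ((δ₂ / δ₁) ^ (1 / δ₂)) *
        (choquetIntegral n δ₁ (fun x => f x ^ (δ₁ / δ₂))) ^ (1 / δ₁) :=
  stmt_3_general n δ₁ δ₂ h1 h12 f
end

section
/- Let κ ∈ [0, 1] and α > 2 − κ. Then there is no constant c > 0 such that ( ∫_{ℝ²} u^α dH^{2−κ}_∞ )^{1/α} ≤ c ∫_{ℝ²} |∇u| dx holds for all nonnegative Lipschitz continuous functions u : ℝ² → ℝ with compact support. In other words, the exponent (n−κ)/(n−1) in the Choquet–Sobolev inequality is the best possible for n = 2. -/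
/-!
Test the inequality on the tents `u_r(x) = max (1 - ‖x‖ / r) 0`. Since `u_r ≥ 1/2` on the ball
`B(0, r/2)`, and a countable cover of a ball by smaller balls has at least the ball's area, the
`(2 - κ)`-content of the level sets gives a left side `≳ r ^ ((2 - κ) / α)`. On the other hand
`|∇u_r| ≤ 1/r` on `B(0, r)` and vanishes outside, so the right side is `≲ c r`. Since
`(2 - κ) / α < 1`, letting `r → 0` contradicts the inequality.
-/

open scoped ENNReal NNReal
open Metric Set Filter MeasureTheory

open Topology

section Covering

variable {E : Type*} [NormedAddCommGroup E] [NormedSpace ℝ E] [MeasurableSpace E] [BorelSpace E]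
  [FiniteDimensional ℝ E]

theorem ofReal_pow_finrank_le_tsum_of_ball_subset_iUnion (μ : Measure E) [μ.IsAddHaarMeasure]
    {x : E} {r : ℝ} (hr : 0 < r) {y : ℕ → E} {ρ : ℕ → ℝ} (hρ : ∀ i, 0 < ρ i)
    (hcov : ball x r ⊆ ⋃ i, ball (y i) (ρ i)) :
    ENNReal.ofReal (r ^ Module.finrank ℝ E) ≤ ∑' i, ENNReal.ofReal (ρ i ^ Module.finrank ℝ E) := by
  have hV₀ : μ (ball 0 1) ≠ 0 := (measure_ball_pos μ _ one_pos).ne'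
  refine (ENNReal.mul_le_mul_iff_left hV₀ measure_ball_lt_top.ne).mp ?_
  calc ENNReal.ofReal (r ^ Module.finrank ℝ E) * μ (ball 0 1)
      = μ (ball x r) := (Measure.addHaar_ball_of_pos μ x hr).symm
    _ ≤ ∑' i, μ (ball (y i) (ρ i)) := (measure_mono hcov).trans (measure_iUnion_le _)
    _ = _ := by
      rw [← ENNReal.tsum_mul_right]
      exact tsum_congr fun i => Measure.addHaar_ball_of_pos μ _ (hρ i)

end Covering

theorem ofReal_rpow_le_tsum_of_pow_le_tsum {d : ℕ} {δ r : ℝ} (hδ₀ : 0 ≤ δ) (hδd : δ ≤ d)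
    (hr : 0 < r) {ρ : ℕ → ℝ} (hρ : ∀ i, 0 < ρ i)
    (h : ENNReal.ofReal (r ^ d) ≤ ∑' i, ENNReal.ofReal (ρ i ^ d)) :
    ENNReal.ofReal (r ^ δ) ≤ ∑' i, ENNReal.ofReal (ρ i ^ δ) := by
  by_cases hbig : ∃ i, r ≤ ρ i
  · obtain ⟨i, hi⟩ := hbig
    exact (ENNReal.ofReal_le_ofReal (Real.rpow_le_rpow hr.le hi hδ₀)).trans (ENNReal.le_tsum i)
  push Not at hbig
  have hsplit : ∀ s : ℝ, 0 < s → s ^ δ = s ^ (δ - d) * s ^ d := fun s hs => by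
    rw [← Real.rpow_natCast, ← Real.rpow_add hs, sub_add_cancel]
  have hterm : ∀ i, r ^ (δ - d) * ρ i ^ d ≤ ρ i ^ δ := fun i => by
    rw [hsplit _ (hρ i)]
    exact mul_le_mul_of_nonneg_right
      (Real.rpow_le_rpow_of_nonpos (hρ i) (hbig i).le (by linarith)) (pow_nonneg (hρ i).le _)
  calc ENNReal.ofReal (r ^ δ)
      = ENNReal.ofReal (r ^ (δ - d)) * ENNReal.ofReal (r ^ d) := by
        rw [hsplit r hr, ENNReal.ofReal_mul (by positivity)]
    _ ≤ ∑' i, ENNReal.ofReal (r ^ (δ - d)) * ENNReal.ofReal (ρ i ^ d) := by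
        rw [ENNReal.tsum_mul_left]; gcongr
    _ ≤ ∑' i, ENNReal.ofReal (ρ i ^ δ) := by
        gcongr with i
        rw [← ENNReal.ofReal_mul (by positivity)]
        exact ENNReal.ofReal_le_ofReal (hterm i)

theorem ofReal_rpow_le_hausdorffContent {n : ℕ} {δ r : ℝ} (hδ₀ : 0 ≤ δ) (hδn : δ ≤ n)
    (hr : 0 < r) {x : EuclideanSpace ℝ (Fin n)} {E : Set (EuclideanSpace ℝ (Fin n))}
    (hE : ball x r ⊆ E) :
    ENNReal.ofReal (r ^ δ) ≤ hausdorffContent n δ E := by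
  refine le_iInf fun c => le_iInf fun hpos => le_iInf fun hcov => ?_
  have h := ofReal_pow_finrank_le_tsum_of_ball_subset_iUnion volume hr hpos (hE.trans hcov)
  rw [finrank_euclideanSpace_fin] at h
  exact ofReal_rpow_le_tsum_of_pow_le_tsum hδ₀ hδn hr hpos h

theorem ofReal_mul_le_choquetIntegral {n : ℕ} {δ r s : ℝ} (hδ₀ : 0 ≤ δ) (hδn : δ ≤ n)
    (hr : 0 < r) (hs : 0 < s) {x : EuclideanSpace ℝ (Fin n)}
    {f : EuclideanSpace ℝ (Fin n) → ℝ≥0∞} (hf : ball x r ⊆ {y | ENNReal.ofReal s ≤ f y}) :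
    ENNReal.ofReal s * ENNReal.ofReal (r ^ δ) ≤ choquetIntegral n δ f := by
  have hlevel : ∀ t ∈ Ioo 0 s,
      ENNReal.ofReal (r ^ δ) ≤ hausdorffContent n δ {y | ENNReal.ofReal t < f y} :=
    fun t ht => ofReal_rpow_le_hausdorffContent hδ₀ hδn hr fun y hy =>
      ((ENNReal.ofReal_lt_ofReal_iff hs).2 ht.2).trans_le (hf hy)
  calc ENNReal.ofReal s * ENNReal.ofReal (r ^ δ)
      = ∫⁻ _ in Ioo 0 s, ENNReal.ofReal (r ^ δ) := by
        rw [setLIntegral_const, Real.volume_Ioo, sub_zero, mul_comm]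
    _ ≤ ∫⁻ t in Ioo 0 s, hausdorffContent n δ {y | ENNReal.ofReal t < f y} :=
        setLIntegral_mono' measurableSet_Ioo hlevel
    _ ≤ choquetIntegral n δ f := lintegral_mono_set Ioo_subset_Ioi_self

theorem lintegral_ofReal_norm_fderiv_le {E F : Type*} [NormedAddCommGroup E] [NormedSpace ℝ E]
    [MeasurableSpace E] [OpensMeasurableSpace E] [NormedAddCommGroup F] [NormedSpace ℝ F]
    {f : E → F} {K : ℝ≥0} (hf : LipschitzWith K f) (μ : Measure E) :
    ∫⁻ x, ENNReal.ofReal ‖fderiv ℝ f x‖ ∂μ ≤ K * μ (tsupport f) := by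
  rw [← lintegral_indicator_const (isClosed_tsupport f).measurableSet]
  refine lintegral_mono fun x => ?_
  by_cases hx : x ∈ tsupport f
  · rw [indicator_of_mem hx, ← ENNReal.ofReal_coe_nnreal]
    exact ENNReal.ofReal_le_ofReal (norm_fderiv_le_of_lipschitz ℝ hf)
  · rw [indicator_of_notMem hx,
      Function.notMem_support.mp fun h => hx (support_fderiv_subset ℝ h), norm_zero,
      ENNReal.ofReal_zero]

section Tent

variable {E : Type*} [NormedAddCommGroup E]

noncomputable def tent (r : ℝ) (x : E) : ℝ := max (1 - ‖x‖ / r) 0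

theorem tent_nonneg (r : ℝ) (x : E) : 0 ≤ tent r x := le_max_right _ _

variable {r : ℝ}

theorem lipschitzWith_tent (hr : 0 < r) : LipschitzWith (Real.toNNReal r⁻¹) (tent r : E → ℝ) := by
  refine LipschitzWith.of_dist_le_mul fun x y => ?_
  rw [Real.coe_toNNReal _ (inv_nonneg.2 hr.le), Real.dist_eq]
  calc |tent r x - tent r y| ≤ |(1 - ‖x‖ / r) - (1 - ‖y‖ / r)| := abs_max_sub_max_le_abs _ _ _
    _ = r⁻¹ * |‖x‖ - ‖y‖| := by
        rw [show 1 - ‖x‖ / r - (1 - ‖y‖ / r) = r⁻¹ * (‖y‖ - ‖x‖) by ring, abs_mul,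
          abs_of_pos (inv_pos.2 hr), abs_sub_comm]
    _ ≤ r⁻¹ * dist x y := by
        gcongr; rw [dist_eq_norm]; exact abs_norm_sub_norm_le x y

theorem tent_eq_zero (hr : 0 < r) {x : E} (hx : r ≤ ‖x‖) : tent r x = 0 :=
  max_eq_right (by rw [sub_nonpos, one_le_div hr]; exact hx)

theorem tsupport_tent_subset (hr : 0 < r) : tsupport (tent r : E → ℝ) ⊆ closedBall 0 r := by
  refine closure_minimal (fun x hx => ?_) isClosed_closedBall
  rw [mem_closedBall_zero_iff]
  by_contra! h
  exact hx (tent_eq_zero hr h.le)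

theorem hasCompactSupport_tent [ProperSpace E] (hr : 0 < r) : HasCompactSupport (tent r : E → ℝ) :=
  (isCompact_closedBall 0 r).of_isClosed_subset (isClosed_tsupport _) (tsupport_tent_subset hr)

theorem one_half_le_tent (hr : 0 < r) {x : E} (hx : ‖x‖ < r / 2) : 1 / 2 ≤ tent r x := by
  refine le_max_of_le_left ?_
  rw [le_sub_comm, div_le_iff₀ hr]
  linarith

theorem lintegral_ofReal_norm_fderiv_tent_le [NormedSpace ℝ E] [MeasurableSpace E]
    [OpensMeasurableSpace E] (hr : 0 < r) (μ : Measure E) :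
    ∫⁻ x, ENNReal.ofReal ‖fderiv ℝ (tent r) x‖ ∂μ ≤ ENNReal.ofReal r⁻¹ * μ (closedBall 0 r) :=
  (lintegral_ofReal_norm_fderiv_le (lipschitzWith_tent hr) μ).trans
    (mul_le_mul_right (measure_mono (tsupport_tent_subset hr)) _)

end Tent

theorem ofReal_le_rpow_choquetIntegral_tent {n : ℕ} {δ α r : ℝ} (hδ₀ : 0 ≤ δ) (hδn : δ ≤ n)
    (hα : 0 < α) (hr : 0 < r) :
    ENNReal.ofReal (1 / 2 * (r / 2) ^ (δ / α)) ≤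
      choquetIntegral n δ (fun x => ENNReal.ofReal (tent r x ^ α)) ^ (1 / α) := by
  have h := ofReal_mul_le_choquetIntegral (f := fun x => ENNReal.ofReal (tent r x ^ α)) hδ₀ hδn
    (half_pos hr) (by positivity : (0 : ℝ) < (1 / 2) ^ α) fun x hx =>
      ENNReal.ofReal_le_ofReal <| Real.rpow_le_rpow (by norm_num)
        (one_half_le_tent hr (mem_ball_zero_iff.mp hx)) hα.le
  rw [← ENNReal.ofReal_mul (by positivity)] at h
  convert ENNReal.rpow_le_rpow h (one_div_nonneg.2 hα.le) using 1
  rw [ENNReal.ofReal_rpow_of_nonneg (by positivity) (by positivity),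
    Real.mul_rpow (by positivity) (by positivity), ← Real.rpow_mul (by norm_num),
    ← Real.rpow_mul (half_pos hr).le, mul_one_div_cancel hα.ne', Real.rpow_one, mul_one_div]

theorem exists_pos_mul_rpow_lt_mul_rpow {a b A : ℝ} (hab : a < b) (hA : 0 < A) (C : ℝ) :
    ∃ x > 0, C * x ^ b < A * x ^ a := by
  have hlim : Tendsto (fun x : ℝ => C * x ^ (b - a)) (𝓝[>] 0) (𝓝 0) := by
    have h := ((Real.continuousAt_rpow_const 0 (b - a) (Or.inr (by linarith))).const_mul
      C).tendsto
    rw [Real.zero_rpow (by linarith), mul_zero] at h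
    exact h.mono_left nhdsWithin_le_nhds
  obtain ⟨x, hxA, hx⟩ := ((hlim.eventually (gt_mem_nhds hA)).and self_mem_nhdsWithin).exists
  refine ⟨x, hx, ?_⟩
  calc C * x ^ b = C * x ^ (b - a) * x ^ a := by
        rw [mul_assoc, ← Real.rpow_add hx, sub_add_cancel]
    _ < A * x ^ a := by gcongr

/-- Sharpness of the exponent $(n-κ)/(n-1)$ in the Choquet–Sobolev inequality
in dimension $n = 2$. -/
theorem stmt_6 (κ α : ℝ) (hκ0 : 0 ≤ κ) (hκ1 : κ ≤ 1) (hα : 2 - κ < α) :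
    ¬ ∃ c : ℝ, 0 < c ∧ ∀ u : EuclideanSpace ℝ (Fin 2) → ℝ,
      (∀ x, 0 ≤ u x) → (∃ K : ℝ≥0, LipschitzWith K u) → HasCompactSupport u →
      (choquetIntegral 2 (2 - κ) (fun x => ENNReal.ofReal (u x ^ α))) ^ (1 / α)
        ≤ ENNReal.ofReal c * ∫⁻ x, ENNReal.ofReal ‖fderiv ℝ u x‖ := by
  rintro ⟨c, hc, hsobolev⟩
  have hα₀ : 0 < α := by linarith
  set v := volume.real (closedBall (0 : EuclideanSpace ℝ (Fin 2)) 1) with hv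
  obtain ⟨ρ, hρ, hlt⟩ :=
    exists_pos_mul_rpow_lt_mul_rpow ((div_lt_one hα₀).2 hα) one_half_pos (2 * c * v)
  rw [Real.rpow_one] at hlt
  have hr : 0 < 2 * ρ := by positivity
  have hlower := ofReal_le_rpow_choquetIntegral_tent (n := 2) (δ := 2 - κ) (by linarith)
    (by push_cast; linarith) hα₀ hr
  rw [mul_div_cancel_left₀ ρ two_ne_zero] at hlower
  have hupper : ENNReal.ofReal c *
      ∫⁻ x : EuclideanSpace ℝ (Fin 2), ENNReal.ofReal ‖fderiv ℝ (tent (2 * ρ)) x‖ ≤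
      ENNReal.ofReal (2 * c * v * ρ) := by
    grw [lintegral_ofReal_norm_fderiv_tent_le hr volume,
      ← ofReal_measureReal measure_closedBall_lt_top.ne,
      Measure.addHaar_real_closedBall' _ _ hr.le, ← hv, finrank_euclideanSpace_fin,
      ← ENNReal.ofReal_mul (by positivity), ← ENNReal.ofReal_mul hc.le]
    exact le_of_eq (congrArg ENNReal.ofReal (by field_simp))
  have hsobolev_tent := hsobolev (tent (2 * ρ)) (tent_nonneg _) ⟨_, lipschitzWith_tent hr⟩
    (hasCompactSupport_tent hr)
  have key := (hlower.trans hsobolev_tent).trans hupper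
  exact hlt.not_ge ((ENNReal.ofReal_le_ofReal_iff (by positivity)).1 key)
end

section
/- Let F : [0, ∞] → [0, ∞] be a left-continuous and non-decreasing function, and set s := sup{ t ∈ [0, ∞] : F(t) < F(∞) }. If s > 0, then for every ε > 0 there exists a strictly increasing sequence t₀ < t₁ < t₂ < … of elements of [0, s) with t₀ = 0 and lim_{i→∞} t_i = s, such that for every i = 1, 2, … and every t ∈ (t_{i−1}, t_i], one has F(t_i) ≤ F(t) + ε. -/
/-! Greedy construction: from `tᵢ` jump to the largest point where `F` is still at most
`F (tᵢ+) + ε`, capped by the `i`-th term of a sequence increasing to `s`. Left-continuity makes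
that largest point itself admissible. If the steps stopped short of `s`, eventually no cap would
be active, so every step would raise the right limit of `F` by `ε`, which is impossible since
`F` is finite below `s`. -/

open scoped ENNReal NNReal
open Metric Set Filter MeasureTheory

open scoped Topology

-- `⨅ y ∈ Ioi a, F y` is the right limit `F (a+)` of a monotone `F`.
noncomputable def staircaseStep {α : Type*} [CompleteLattice α] (F : α → ℝ≥0∞) (ε : ℝ≥0∞)
    (a : α) : α :=
  sSup {x | F x ≤ (⨅ y ∈ Ioi a, F y) + ε}

noncomputable def staircase {α : Type*} [CompleteLinearOrder α] (F : α → ℝ≥0∞) (ε : ℝ≥0∞)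
    (u : ℕ → α) : ℕ → α
  | 0 => ⊥
  | n + 1 => min (staircaseStep F ε (staircase F ε u n)) (u n)

section Order

variable {α : Type*} [CompleteLinearOrder α] {F : α → ℝ≥0∞} {ε : ℝ≥0∞}

theorem lt_staircaseStep {a : α} (ha : ∃ x, a < x ∧ F x ≠ ⊤) (hε : ε ≠ 0) :
    a < staircaseStep F ε a := by
  obtain ⟨x, hax, hx⟩ := ha
  have hlim : (⨅ y ∈ Ioi a, F y) ≠ ⊤ := ne_top_of_le_ne_top hx (iInf₂_le x hax)
  obtain ⟨y, hy⟩ := iInf_lt_iff.1 (ENNReal.lt_add_right hlim hε)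
  obtain ⟨hay, hy⟩ := iInf_lt_iff.1 hy
  exact hay.trans_le (le_sSup (show y ∈ {x | F x ≤ _} from hy.le))

theorem add_le_iInf_Ioi_staircaseStep (a : α) :
    (⨅ y ∈ Ioi a, F y) + ε ≤ ⨅ y ∈ Ioi (staircaseStep F ε a), F y :=
  le_iInf₂ fun y hy => le_of_not_ge fun h =>
    (le_sSup (show y ∈ {x | F x ≤ (⨅ y ∈ Ioi a, F y) + ε} from h)).not_gt hy

variable {u : ℕ → α}

theorem staircase_lt (hu : StrictMono u) (hu0 : ⊥ < u 0) : ∀ n, staircase F ε u n < u n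
  | 0 => hu0
  | n + 1 => (min_le_right _ _).trans_lt (hu n.lt_succ_self)

theorem staircase_strictMono (hu : StrictMono u) (hu0 : ⊥ < u 0) (hfin : ∀ n, F (u n) ≠ ⊤)
    (hε : ε ≠ 0) : StrictMono (staircase F ε u) :=
  strictMono_nat_of_lt_succ fun n =>
    lt_min (lt_staircaseStep ⟨u n, staircase_lt hu hu0 n, hfin n⟩ hε) (staircase_lt hu hu0 n)

end Order

section Topology

variable {α : Type*} [CompleteLinearOrder α] [TopologicalSpace α] [OrderTopology α]
  {F : α → ℝ≥0∞} {ε : ℝ≥0∞}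

theorem Monotone.le_of_le_sSup_setOf_le [DenselyOrdered α] {β : Type*} [Preorder β]
    [TopologicalSpace β] [ClosedIicTopology β] {F : α → β} (hF : Monotone F) {c : β} {x : α}
    (hleft : Tendsto F (𝓝[<] sSup {x | F x ≤ c}) (𝓝 (F (sSup {x | F x ≤ c}))))
    (h0 : ⊥ < sSup {x | F x ≤ c}) (hx : x ≤ sSup {x | F x ≤ c}) : F x ≤ c := by
  refine (hF hx).trans ?_
  have := nhdsLT_neBot_of_exists_lt ⟨⊥, h0⟩
  refine _root_.le_of_tendsto hleft (eventually_nhdsWithin_of_forall fun y hy => ?_)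
  obtain ⟨z, hz, hyz⟩ := lt_sSup_iff.1 hy
  exact (hF hyz.le).trans hz

theorem le_add_of_le_staircaseStep [DenselyOrdered α] (hF : Monotone F)
    (hleft : ∀ t, ⊥ < t → Tendsto F (𝓝[<] t) (𝓝 (F t))) {a b : α} (hab : a < b)
    (hb : b ≤ staircaseStep F ε a) : ∀ y ∈ Ioc a b, F b ≤ F y + ε := fun y hy =>
  calc F b ≤ (⨅ z ∈ Ioi a, F z) + ε :=
        hF.le_of_le_sSup_setOf_le (hleft _ (bot_le.trans_lt (hab.trans_le hb)))
          (bot_le.trans_lt (hab.trans_le hb)) hb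
    _ ≤ F y + ε := add_le_add_left (iInf₂_le y hy.1) ε

theorem tendsto_staircase (hε : ε ≠ 0) {u : ℕ → α} (hu : StrictMono u) (hu0 : ⊥ < u 0)
    {s : α} (hus : ∀ n, u n < s) (hu_tend : Tendsto u atTop (𝓝 s))
    (hfin : ∀ x < s, F x ≠ ⊤) : Tendsto (staircase F ε u) atTop (𝓝 s) := by
  set t := staircase F ε u
  have ht : StrictMono t := staircase_strictMono hu hu0 (fun n => hfin _ (hus n)) hε
  suffices hL : ⨆ n, t n = s from hL ▸ tendsto_atTop_iSup ht.monotone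
  refine (iSup_le fun n => ((staircase_lt hu hu0 n).trans (hus n)).le).eq_of_not_lt fun hL => ?_
  obtain ⟨N, hN⟩ := eventually_atTop.1 (hu_tend.eventually (lt_mem_nhds hL))
  have hstep : ∀ n ≥ N, t (n + 1) = staircaseStep F ε (t n) := fun n hn =>
    min_eq_left ((min_lt_iff.1 ((le_iSup t (n + 1)).trans_lt (hN n hn))).resolve_right
      (lt_irrefl _)).le
  have hgrowth : ∀ k : ℕ, (k : ℝ≥0∞) * ε ≤ ⨅ y ∈ Ioi (t (N + k)), F y := by
    intro k
    induction k with
    | zero => simp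
    | succ k ih =>
      calc ((k + 1 : ℕ) : ℝ≥0∞) * ε = k * ε + ε := by push_cast; ring
        _ ≤ (⨅ y ∈ Ioi (t (N + k)), F y) + ε := add_le_add_left ih ε
        _ ≤ ⨅ y ∈ Ioi (t (N + (k + 1))), F y := by
          rw [← add_assoc, hstep _ (Nat.le_add_right N k)]
          exact add_le_iInf_Ioi_staircaseStep _
  obtain ⟨k, hk⟩ := ENNReal.exists_nat_mul_gt hε (hfin _ hL)
  exact hk.not_ge ((hgrowth k).trans
    (iInf₂_le _ ((ht (N + k).lt_succ_self).trans_le (le_iSup t _))))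

end Topology

/-- The staircase lemma for left-continuous non-decreasing functions on $[0,∞]$. -/
theorem stmt_10 (F : ℝ≥0∞ → ℝ≥0∞) (hmono : Monotone F)
    (hleft : ∀ t : ℝ≥0∞, 0 < t → Tendsto F (nhdsWithin t (Set.Iio t)) (nhds (F t)))
    (s : ℝ≥0∞) (hs : s = sSup {t | F t < F ⊤}) (hs0 : 0 < s) :
    ∀ ε : ℝ≥0∞, 0 < ε → ∃ t : ℕ → ℝ≥0∞, t 0 = 0 ∧ StrictMono t ∧
      (∀ i, t i < s) ∧ Tendsto t atTop (nhds s) ∧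
      ∀ i : ℕ, ∀ x ∈ Set.Ioc (t i) (t (i + 1)), F (t (i + 1)) ≤ F x + ε := by
  intro ε hε
  have hfin : ∀ x < s, F x ≠ ⊤ := fun x hx => by
    obtain ⟨w, hw, hxw⟩ := lt_sSup_iff.1 (hs ▸ hx)
    exact ((hmono hxw.le).trans_lt hw).ne_top
  obtain ⟨u, hu, hu_mem, hu_tend⟩ := exists_seq_strictMono_tendsto' hs0
  have ht := staircase_strictMono (F := F) (ε := ε) hu (hu_mem 0).1
    (fun n => hfin _ (hu_mem n).2) hε.ne'
  refine ⟨staircase F ε u, rfl, ht,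
    fun n => (staircase_lt hu (hu_mem 0).1 n).trans (hu_mem n).2,
    tendsto_staircase hε.ne' hu (hu_mem 0).1 (fun n => (hu_mem n).2) hu_tend hfin,
    fun i => le_add_of_le_staircaseStep hmono hleft (ht i.lt_succ_self) (min_le_left _ _)⟩
end

section
/- Let n ≥ 2 and κ ∈ [0, 1]. There exists a constant c = c(n) > 0 such that for every nonnegative smooth function u : ℝⁿ → ℝ with compact support, ∫_{ℝⁿ} |∇u(x)| / ( H^{n−κ}_∞({y ∈ ℝⁿ : u(y) ≥ u(x)}) )^{(n−1)/(n−κ)} dx ≤ c ∫_{ℝⁿ} |∇u(x)| / |{y ∈ ℝⁿ : u(y) ≥ u(x)}|^{(n−1)/n} dx, where |·| denotes Lebesgue measure and the quotients are interpreted in the extended nonnegative reals (with 0/0 = 0). -/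
open scoped ENNReal NNReal
open Metric Set Filter MeasureTheory

/-- `∑ a_i ^ p ≤ (∑ a_i) ^ p` for `p ≥ 1`, finite sums. -/
lemma sum_rpow_le_rpow_sum' {p : ℝ} (hp : 1 ≤ p) (f : ℕ → ℝ≥0∞) (s : Finset ℕ) :
    ∑ i ∈ s, f i ^ p ≤ (∑ i ∈ s, f i) ^ p := by
  induction s using Finset.cons_induction with
  | empty => simp [ENNReal.zero_rpow_of_pos (lt_of_lt_of_le zero_lt_one hp)]
  | cons a s ha ih =>
      rw [Finset.sum_cons, Finset.sum_cons]
      calc f a ^ p + ∑ i ∈ s, f i ^ p ≤ f a ^ p + (∑ i ∈ s, f i) ^ p := by gcongr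
        _ ≤ (f a + ∑ i ∈ s, f i) ^ p := ENNReal.add_rpow_le_rpow_add _ _ hp

/-- `∑' a_i ^ p ≤ (∑' a_i) ^ p` for `p ≥ 1`. -/
lemma tsum_rpow_le_rpow_tsum' {p : ℝ} (hp : 1 ≤ p) (f : ℕ → ℝ≥0∞) :
    ∑' i, f i ^ p ≤ (∑' i, f i) ^ p := by
  rw [ENNReal.tsum_eq_iSup_sum]
  refine iSup_le fun s => (sum_rpow_le_rpow_sum' hp f s).trans ?_
  refine ENNReal.rpow_le_rpow ?_ (le_trans zero_le_one hp)
  rw [ENNReal.tsum_eq_iSup_sum]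
  exact le_iSup (fun t : Finset ℕ => ∑ i ∈ t, f i) s

lemma div_aux {a b d C : ℝ≥0∞} (hC0 : C ≠ 0) (hCt : C ≠ ⊤) (h : d ≤ C * b) :
    a / b ≤ C * (a / d) := by
  have hb : b⁻¹ ≤ C * d⁻¹ := by
    rw [← div_eq_mul_inv, ENNReal.le_div_iff_mul_le (Or.inr hC0) (Or.inr hCt)]
    calc b⁻¹ * d ≤ b⁻¹ * (C * b) := by gcongr
      _ = C * (b⁻¹ * b) := by ring
      _ ≤ C * 1 := by gcongr; exact ENNReal.inv_mul_le_one b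
      _ = C := mul_one C
  calc a / b = a * b⁻¹ := div_eq_mul_inv a b
    _ ≤ a * (C * d⁻¹) := by gcongr
    _ = C * (a / d) := by rw [div_eq_mul_inv]; ring

/-- Key pointwise estimate: `vol(E)^((n-1)/n) ≤ C · H^{n-κ}(E)^((n-1)/(n-κ))`. -/
lemma key_estimate (n : ℕ) (hn : 2 ≤ n) (κ : ℝ) (hκ0 : 0 ≤ κ) (hκ1 : κ ≤ 1) :
    ∃ C : ℝ≥0∞, C ≠ 0 ∧ C ≠ ⊤ ∧ ∀ E : Set (EuclideanSpace ℝ (Fin n)),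
      volume E ^ (((n : ℝ) - 1) / n) ≤
        C * hausdorffContent n ((n : ℝ) - κ) E ^ (((n : ℝ) - 1) / ((n : ℝ) - κ)) := by
  have hn2 : (2 : ℝ) ≤ (n : ℝ) := by exact_mod_cast hn
  have hnκ : (0 : ℝ) < (n : ℝ) - κ := by linarith
  set q : ℝ := (n : ℝ) / ((n : ℝ) - κ) with hq
  have hq1 : 1 ≤ q := (one_le_div hnκ).2 (by linarith)
  have hq0 : 0 < q := lt_of_lt_of_le zero_lt_one hq1
  set q' : ℝ := ((n : ℝ) - 1) / ((n : ℝ) - κ) with hq'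
  have hq'0 : 0 ≤ q' := div_nonneg (by linarith) hnκ.le
  set K : ℝ≥0∞ := volume (Metric.ball (0 : EuclideanSpace ℝ (Fin n)) 1) with hK
  have hK0 : K ≠ 0 := (measure_ball_pos volume _ one_pos).ne'
  have hKt : K ≠ ⊤ := measure_ball_lt_top.ne
  set K' : ℝ≥0∞ := K ^ (1 / q) with hK'
  have hK'0 : K' ≠ 0 := (ENNReal.rpow_pos (pos_iff_ne_zero.2 hK0) hKt).ne'
  have hK't : K' ≠ ⊤ := (ENNReal.rpow_lt_top_of_nonneg (by positivity) hKt).ne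
  refine ⟨K' ^ q', (ENNReal.rpow_pos (pos_iff_ne_zero.2 hK'0) hK't).ne',
    (ENNReal.rpow_lt_top_of_nonneg hq'0 hK't).ne, fun E => ?_⟩
  -- Step A: for every cover, vol E ≤ K * S^q
  have stepA : ∀ (c : ℕ → EuclideanSpace ℝ (Fin n) × ℝ), (∀ i, 0 < (c i).2) →
      E ⊆ ⋃ i, Metric.ball (c i).1 (c i).2 →
      volume E ≤ K * (∑' i, ENNReal.ofReal ((c i).2 ^ ((n : ℝ) - κ))) ^ q := by
    intro c hpos hcov
    calc volume E ≤ ∑' i, volume (Metric.ball (c i).1 (c i).2) :=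
          (measure_mono hcov).trans (measure_iUnion_le _)
      _ = ∑' i, (ENNReal.ofReal ((c i).2 ^ ((n : ℝ) - κ))) ^ q * K := by
          refine tsum_congr fun i => ?_
          rw [Measure.addHaar_ball_of_pos volume _ (hpos i), finrank_euclideanSpace_fin, ← hK]
          congr 1
          rw [ENNReal.ofReal_rpow_of_pos (Real.rpow_pos_of_pos (hpos i) _),
            ← Real.rpow_mul (hpos i).le]
          have hnq : ((n : ℝ) - κ) * q = (n : ℝ) := by rw [hq]; field_simp
          rw [hnq, Real.rpow_natCast]
      _ = K * ∑' i, (ENNReal.ofReal ((c i).2 ^ ((n : ℝ) - κ))) ^ q := by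
          rw [ENNReal.tsum_mul_right, mul_comm]
      _ ≤ K * (∑' i, ENNReal.ofReal ((c i).2 ^ ((n : ℝ) - κ))) ^ q := by
          gcongr
          exact tsum_rpow_le_rpow_tsum' hq1 _
  -- Step B: vol E ^ (1/q) ≤ K' * H
  have stepB : volume E ^ (1 / q) ≤ K' * hausdorffContent n ((n : ℝ) - κ) E := by
    have hL : volume E ^ (1 / q) * K'⁻¹ ≤ hausdorffContent n ((n : ℝ) - κ) E := by
      refine le_iInf fun c => le_iInf fun hpos => le_iInf fun hcov => ?_
      set S := ∑' i, ENNReal.ofReal ((c i).2 ^ ((n : ℝ) - κ)) with hS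
      have h1 : volume E ^ (1 / q) ≤ K' * S := by
        calc volume E ^ (1 / q) ≤ (K * S ^ q) ^ (1 / q) :=
              ENNReal.rpow_le_rpow (stepA c hpos hcov) (by positivity)
          _ = K' * S := by
              rw [ENNReal.mul_rpow_of_nonneg _ _ (by positivity : (0:ℝ) ≤ 1 / q),
                ← ENNReal.rpow_mul, mul_one_div, div_self hq0.ne', ENNReal.rpow_one, hK']
      calc volume E ^ (1 / q) * K'⁻¹ ≤ K' * S * K'⁻¹ := by gcongr
        _ = S * (K' * K'⁻¹) := by ring
        _ = S := by rw [ENNReal.mul_inv_cancel hK'0 hK't, mul_one]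
    have := mul_le_mul_left hL K'
    calc volume E ^ (1 / q) = volume E ^ (1 / q) * (K'⁻¹ * K') := by
          rw [ENNReal.inv_mul_cancel hK'0 hK't, mul_one]
      _ = volume E ^ (1 / q) * K'⁻¹ * K' := by ring
      _ ≤ hausdorffContent n ((n : ℝ) - κ) E * K' := this
      _ = K' * hausdorffContent n ((n : ℝ) - κ) E := mul_comm _ _
  -- Step C: raise to power q'
  have hexp : ((n : ℝ) - 1) / n = 1 / q * q' := by
    rw [hq, hq']
    field_simp
  calc volume E ^ (((n : ℝ) - 1) / n) = (volume E ^ (1 / q)) ^ q' := by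
        rw [← ENNReal.rpow_mul, ← hexp]
    _ ≤ (K' * hausdorffContent n ((n : ℝ) - κ) E) ^ q' := ENNReal.rpow_le_rpow stepB hq'0
    _ = K' ^ q' * hausdorffContent n ((n : ℝ) - κ) E ^ q' :=
        ENNReal.mul_rpow_of_nonneg _ _ hq'0

/-- The Hausdorff-content superlevel integrand is dominated by the Lebesgue-measure
superlevel integrand. -/
theorem stmt_14 (n : ℕ) (hn : 2 ≤ n) (κ : ℝ) (hκ0 : 0 ≤ κ) (hκ1 : κ ≤ 1) :
    ∃ c : ℝ, 0 < c ∧ ∀ u : EuclideanSpace ℝ (Fin n) → ℝ,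
      (∀ x, 0 ≤ u x) → ContDiff ℝ (⊤ : ℕ∞) u → HasCompactSupport u →
      (∫⁻ x, ENNReal.ofReal ‖fderiv ℝ u x‖ /
          (hausdorffContent n ((n : ℝ) - κ) {y | u x ≤ u y})
            ^ (((n : ℝ) - 1) / ((n : ℝ) - κ)))
        ≤ ENNReal.ofReal c *
          ∫⁻ x, ENNReal.ofReal ‖fderiv ℝ u x‖ /
            (volume {y | u x ≤ u y}) ^ (((n : ℝ) - 1) / n) := by
  obtain ⟨C, hC0, hCt, hC⟩ := key_estimate n hn κ hκ0 hκ1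
  refine ⟨C.toReal, ENNReal.toReal_pos hC0 hCt, fun u _ _ _ => ?_⟩
  rw [ENNReal.ofReal_toReal hCt, ← lintegral_const_mul' _ _ hCt]
  refine lintegral_mono fun x => ?_
  exact div_aux hC0 hCt (hC {y | u x ≤ u y})
end
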